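/- Let L be a bounded distributive lattice and A an n×n matrix over L. The fixed-point equation xA = x has a nonzero solution x ∈ L^n if and only if A is not nilpotent (i.e., A^k ≠ 0 for all k ≥ 1). -/
import Mathlib


/-- Multiplication of `n × n` matrices over a bounded lattice `L`:
`(A * B) i j = ⋁ k, (A i k ⊓ B k j)`. -/
def bMatMul {L : Type*} [Lattice L] [BoundedOrder L] {n : ℕ}
    (A B : Matrix (Fin n) (Fin n) L) : Matrix (Fin n) (Fin n) L :=
  Matrix.of fun i j => Finset.univ.sup fun k => A i k ⊓ B k j

/-- The identity matrix over a bounded lattice. -/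
def idMat {L : Type*} [Lattice L] [BoundedOrder L] {n : ℕ} : Matrix (Fin n) (Fin n) L :=
  Matrix.of fun i j => if i = j then ⊤ else ⊥

/-- Powers of a matrix: `A^0 = I` and `A^(k+1) = A^k * A` (so `A^1 = A`). -/
def matPow {L : Type*} [Lattice L] [BoundedOrder L] {n : ℕ}
    (A : Matrix (Fin n) (Fin n) L) : ℕ → Matrix (Fin n) (Fin n) L
  | 0 => idMat
  | k + 1 => bMatMul (matPow A k) A

/-- The all-zero matrix. -/
def botMat {L : Type*} [Lattice L] [BoundedOrder L] {n : ℕ} : Matrix (Fin n) (Fin n) L :=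
  Matrix.of fun _ _ => ⊥

/-- Multiplication of a row vector `x ∈ Lⁿ` by an `n × n` matrix:
`(x A) j = ⋁ i, (x i ⊓ A i j)`. -/
def vecMatMul {L : Type*} [Lattice L] [BoundedOrder L] {n : ℕ}
    (x : Fin n → L) (A : Matrix (Fin n) (Fin n) L) : Fin n → L :=
  fun j => Finset.univ.sup fun i => x i ⊓ A i j

lemma matPow_one {L : Type*} [Lattice L] [BoundedOrder L] {n : ℕ}
    (A : Matrix (Fin n) (Fin n) L) : matPow A 1 = A := by
  funext i j
  show Finset.univ.sup (fun k => idMat i k ⊓ A k j) = A i j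
  apply le_antisymm
  · apply Finset.sup_le
    intro k _
    by_cases h : i = k
    · subst h; simp [idMat]
    · simp [idMat, h]
  · have h := Finset.le_sup (f := fun k => idMat i k ⊓ A k j) (Finset.mem_univ i)
    simpa [idMat] using h

lemma vecMatMul_bMatMul {L : Type*} [DistribLattice L] [BoundedOrder L] {n : ℕ}
    (x : Fin n → L) (B A : Matrix (Fin n) (Fin n) L) :
    vecMatMul x (bMatMul B A) = vecMatMul (vecMatMul x B) A := by
  funext j
  show Finset.univ.sup (fun i => x i ⊓ Finset.univ.sup fun k => B i k ⊓ A k j)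
      = Finset.univ.sup (fun k => (Finset.univ.sup fun i => x i ⊓ B i k) ⊓ A k j)
  simp only [Finset.sup_inf_distrib_left, Finset.sup_inf_distrib_right]
  rw [Finset.sup_comm]
  simp [inf_assoc]

lemma vecMatMul_matPow {L : Type*} [DistribLattice L] [BoundedOrder L] {n : ℕ}
    (x : Fin n → L) (A : Matrix (Fin n) (Fin n) L) (h : vecMatMul x A = x) :
    ∀ k, 1 ≤ k → vecMatMul x (matPow A k) = x := by
  intro k hk
  induction k with
  | zero => omega
  | succ k ih =>
    rcases Nat.eq_or_lt_of_le hk with h1 | h1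
    · rw [← h1, matPow_one]; exact h
    · show vecMatMul x (bMatMul (matPow A k) A) = x
      rw [vecMatMul_bMatMul, ih (by omega), h]

lemma matPow_mem {L : Type*} [DistribLattice L] [BoundedOrder L] {n : ℕ}
    (A : Matrix (Fin n) (Fin n) L) :
    ∀ k, ∀ i j : Fin n, ∃ T : Finset (Finset (Fin n × Fin n)),
      matPow A (k + 1) i j = T.sup (fun S => S.inf (fun p => A p.1 p.2)) := by
  intro k
  induction k with
  | zero =>
    intro i j
    refine ⟨{{(i, j)}}, ?_⟩
    rw [matPow_one]
    simp
  | succ k ih =>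
    intro i j
    choose T hT using ih
    refine ⟨Finset.univ.biUnion (fun p => (T i p).image (insert (p, j))), ?_⟩
    show Finset.univ.sup (fun p => matPow A (k + 1) i p ⊓ A p j) = _
    rw [Finset.sup_biUnion]
    congr 1
    funext p
    rw [hT i p, Finset.sup_inf_distrib_right, Finset.sup_image]
    congr 1
    funext S
    show S.inf (fun q => A q.1 q.2) ⊓ A p j = (insert (p, j) S).inf (fun q => A q.1 q.2)
    rw [Finset.inf_insert, inf_comm]

lemma exists_pow_eq {L : Type*} [DistribLattice L] [BoundedOrder L] {n : ℕ}
    (A : Matrix (Fin n) (Fin n) L) :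
    ∃ k l, 1 ≤ k ∧ k < l ∧ matPow A k = matPow A l := by
  classical
  set W : Finset L := Finset.univ.image
    (fun T : Finset (Finset (Fin n × Fin n)) => T.sup (fun S => S.inf (fun p => A p.1 p.2)))
    with hW
  have hmem : ∀ k (i j : Fin n), matPow A (k + 1) i j ∈ W := by
    intro k i j
    obtain ⟨T, hT⟩ := matPow_mem A k i j
    rw [hT, hW]
    exact Finset.mem_image_of_mem _ (Finset.mem_univ T)
  let f : ℕ → (Fin n → Fin n → W) := fun k i j => ⟨matPow A (k + 1) i j, hmem k i j⟩
  obtain ⟨a, b, hab, hfab⟩ := Finite.exists_ne_map_eq_of_infinite f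
  have heq : matPow A (a + 1) = matPow A (b + 1) := by
    funext i j
    have := congrFun (congrFun hfab i) j
    exact Subtype.ext_iff.mp this
  rcases lt_or_gt_of_ne hab with h | h
  · exact ⟨a + 1, b + 1, by omega, by omega, heq⟩
  · exact ⟨b + 1, a + 1, by omega, by omega, heq.symm⟩

/-- Over a bounded distributive lattice, the fixed-point equation `xA = x` has a nonzero
solution iff the matrix `A` is not nilpotent (`A^k ≠ 0` for all `k ≥ 1`). -/
theorem exists_nonzero_fixed_point_iff_not_nilpotent {L : Type*} [DistribLattice L]
    [BoundedOrder L] {n : ℕ} (A : Matrix (Fin n) (Fin n) L) :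
    (∃ x : Fin n → L, x ≠ (fun _ => ⊥) ∧ vecMatMul x A = x) ↔
      ∀ k : ℕ, 1 ≤ k → matPow A k ≠ botMat := by
  constructor
  · rintro ⟨x, hx, hfix⟩ k hk hbot
    apply hx
    have := vecMatMul_matPow x A hfix k hk
    rw [hbot] at this
    rw [← this]
    funext j
    show Finset.univ.sup (fun i => x i ⊓ botMat i j) = ⊥
    simp [botMat]
  · intro hA
    obtain ⟨k, l, hk1, hkl, hpow⟩ := exists_pow_eq A
    have hne : matPow A k ≠ botMat := hA k hk1
    have hij : ∃ i j, matPow A k i j ≠ ⊥ := by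
      by_contra h
      push_neg at h
      exact hne (by funext i j; exact h i j)
    obtain ⟨i₀, j₀, hij⟩ := hij
    set g : ℕ → Fin n → L := fun m j => matPow A m i₀ j with hg
    set x : Fin n → L := fun j => (Finset.Ico k l).sup (fun m => g m j) with hx
    have hgl : ∀ j, g l j = g k j := fun j => by rw [hg]; simp [hpow]
    refine ⟨x, ?_, ?_⟩
    · intro h
      apply hij
      have h1 : x j₀ = ⊥ := congrFun h j₀
      have h2 : g k j₀ ≤ x j₀ :=
        Finset.le_sup (f := fun m => g m j₀) (Finset.mem_Ico.mpr ⟨le_refl k, hkl⟩)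
      rw [h1] at h2
      exact le_bot_iff.mp h2
    · funext j
      show Finset.univ.sup (fun p => x p ⊓ A p j) = x j
      have step : Finset.univ.sup (fun p => x p ⊓ A p j)
          = (Finset.Ico k l).sup (fun m => g (m + 1) j) := by
        rw [hx]
        simp only [Finset.sup_inf_distrib_right]
        rw [Finset.sup_comm]
        apply Finset.sup_congr rfl
        intro m _
        show (Finset.univ.sup fun p => g m p ⊓ A p j) = g (m + 1) j
        rfl
      rw [step, hx]
      apply le_antisymm
      · apply Finset.sup_le
        intro m hm
        rw [Finset.mem_Ico] at hm
        rcases Nat.lt_or_ge (m + 1) l with h1 | h1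
        · exact Finset.le_sup (f := fun m => g m j) (Finset.mem_Ico.mpr ⟨by omega, h1⟩)
        · have hml : m + 1 = l := by omega
          rw [hml, hgl]
          exact Finset.le_sup (f := fun m => g m j) (Finset.mem_Ico.mpr ⟨le_refl k, hkl⟩)
      · apply Finset.sup_le
        intro m hm
        rw [Finset.mem_Ico] at hm
        rcases Nat.eq_or_lt_of_le hm.1 with h1 | h1
        · rw [← h1, ← hgl j]
          have hl : l = (l - 1) + 1 := by omega
          rw [hl]
          exact Finset.le_sup (f := fun m => g (m + 1) j) (b := l - 1)
            (Finset.mem_Ico.mpr ⟨by omega, by omega⟩)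
        · have hm : m = (m - 1) + 1 := by omega
          rw [hm]
          exact Finset.le_sup (f := fun m => g (m + 1) j) (b := m - 1)
            (Finset.mem_Ico.mpr ⟨by omega, by omega⟩)
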